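/- Let p be a prime, n ≥ 1, and 0 ≤ k ≤ n. Let M be a ℤ_p-submodule of ℚ_p^n that is the internal direct sum M = V ⊕ L of a k-dimensional ℚ_p-subspace V of ℚ_p^n and a free ℤ_p-submodule L of ℚ_p^n of rank n−k. Then there exist g ∈ GL_n(ℚ) and s ∈ SL_n(ℤ_p) such that g·M = s·M₀, where M₀ = span_{ℚ_p}(e₁,…,e_k) ⊕ (ℤ_p e_{k+1} ⊕ ⋯ ⊕ ℤ_p e_n). -/

import Mathlib

open scoped MatrixGroups

/-- The image of a `ℚ_p`-subspace of `ℚ_p^n` under the matrix `g`. -/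
noncomputable def matActP {p : ℕ} [Fact p.Prime] {n : ℕ} (g : Matrix (Fin n) (Fin n) ℚ_[p])
    (V : Submodule ℚ_[p] (Fin n → ℚ_[p])) : Submodule ℚ_[p] (Fin n → ℚ_[p]) :=
  V.map g.mulVecLin

/-- A matrix in `SL_n(ℤ_p)`, viewed as a `p`-adic matrix. -/
noncomputable def pMat {p : ℕ} [Fact p.Prime] {n : ℕ}
    (g : Matrix.SpecialLinearGroup (Fin n) ℤ_[p]) : Matrix (Fin n) (Fin n) ℚ_[p] :=
  (g : Matrix (Fin n) (Fin n) ℤ_[p]).map ((↑) : ℤ_[p] → ℚ_[p])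

/-- A rational invertible matrix, viewed as a `p`-adic matrix. -/
noncomputable def qMat {p : ℕ} [Fact p.Prime] {n : ℕ} (g : GL (Fin n) ℚ) :
    Matrix (Fin n) (Fin n) ℚ_[p] :=
  (g : Matrix (Fin n) (Fin n) ℚ).map (Rat.cast : ℚ → ℚ_[p])

/-- The image of a `ℤ_p`-submodule of `ℚ_p^n` under the matrix `A`. -/
noncomputable def zAct {p : ℕ} [Fact p.Prime] {n : ℕ} (A : Matrix (Fin n) (Fin n) ℚ_[p])
    (M : Submodule ℤ_[p] (Fin n → ℚ_[p])) : Submodule ℤ_[p] (Fin n → ℚ_[p]) :=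
  M.map (A.mulVecLin.restrictScalars ℤ_[p])

/-- The standard subspace `V₀ = ℚ_p e₁ ⊕ ⋯ ⊕ ℚ_p e_k` of `ℚ_p^n`. -/
noncomputable def stdSubspace (p n k : ℕ) [Fact p.Prime] :
    Submodule ℚ_[p] (Fin n → ℚ_[p]) :=
  Submodule.span ℚ_[p] {w | ∃ i : Fin n, i.val < k ∧ w = Pi.single i 1}

/-- The standard module `M₀ = V₀ ⊕ (ℤ_p e_{k+1} ⊕ ⋯ ⊕ ℤ_p e_n)`. -/
noncomputable def stdModule (p n k : ℕ) [Fact p.Prime] :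
    Submodule ℤ_[p] (Fin n → ℚ_[p]) :=
  (stdSubspace p n k).restrictScalars ℤ_[p] ⊔
    Submodule.span ℤ_[p] {w | ∃ i : Fin n, k ≤ i.val ∧ w = Pi.single i 1}

/-!
Pick a `ℚ_p`-basis of `ℚ_p^n` whose first `k` vectors span `V` and whose last `n - k` vectors
are a `ℤ_p`-basis of `L` (they are independent over `ℚ_p` because `V ∩ L = 0` forces
`V ∩ ℚ_p L = 0`). The matrix `A` with these columns carries `M₀` onto `M`. Since `ℚ` is dense
in `ℚ_p`, some rational `Q` is so close to `A⁻¹` that `QA ≡ 1 (mod p)`, so `QA ∈ GL_n(ℤ_p)`.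
Finally `QA = s D` with `s ∈ SL_n(ℤ_p)` and `D` diagonal with unit entries, and `D` fixes `M₀`,
so `Q · M = QA · M₀ = s · M₀`.
-/

open Matrix Submodule IsLocalRing

theorem Submodule.disjoint_span_of_disjoint_restrictScalars {R K W : Type*} [CommRing R]
    [CommRing K] [Algebra R K] (S : Submonoid R) [IsLocalization S K] [AddCommGroup W]
    [Module R W] [Module K W] [IsScalarTower R K W] {V : Submodule K W} {L : Submodule R W}
    (h : Disjoint (V.restrictScalars R) L) : Disjoint V (span K (L : Set W)) := by
  refine Submodule.disjoint_def.2 fun x hxV hxL => ?_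
  obtain ⟨y, hy, z, rfl⟩ := (IsLocalization.mem_span_iff S).1 hxL
  rw [Submodule.span_eq] at hy
  have hyV : y ∈ V := by
    have := V.smul_mem (algebraMap R K z) hxV
    rwa [smul_smul, IsLocalization.mk'_spec', map_one, one_smul] at this
  rw [Submodule.disjoint_def.1 h y hyV hy, smul_zero]

theorem Module.Basis.span_range_subtype_comp {R M ι : Type*} [Semiring R] [AddCommMonoid M]
    [Module R M] {N : Submodule R M} (b : Module.Basis ι R N) :
    span R (Set.range (N.subtype ∘ b)) = N := by
  rw [Set.range_comp, span_image, b.span_eq, map_subtype_top]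

theorem Matrix.isUnit_det_of_sub_one_mem_maximalIdeal {R ι : Type*} [CommRing R] [IsLocalRing R]
    [Fintype ι] [DecidableEq ι] (B : Matrix ι ι R)
    (h : ∀ i j, (B - 1) i j ∈ maximalIdeal R) : IsUnit B.det := by
  have hres : B.map (residue R) = 1 := by
    rw [← (residue R).mapMatrix_apply, ← sub_eq_zero, ← map_one (residue R).mapMatrix, ← map_sub]
    ext i j
    exact (residue_eq_zero_iff _).2 (h i j)
  rw [← residue_ne_zero_iff_isUnit, RingHom.map_det, RingHom.mapMatrix_apply, hres, det_one]
  exact one_ne_zero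

theorem Matrix.exists_eq_specialLinearGroup_mul_diagonal {R ι : Type*} [CommRing R]
    [Fintype ι] [DecidableEq ι] (B : Matrix ι ι R) (hB : IsUnit B.det) :
    ∃ (s : SpecialLinearGroup ι R) (d : ι → Rˣ), B = s * diagonal fun i => (d i : R) := by
  rcases isEmpty_or_nonempty ι with _ | ⟨⟨i₀⟩⟩
  · exact ⟨1, 1, Subsingleton.elim _ _⟩
  · let d : ι → Rˣ := Pi.mulSingle i₀ hB.unit
    have hdet : (B * diagonal fun i => (((d i)⁻¹ : Rˣ) : R)).det = 1 := by
      rw [det_mul, det_diagonal, ← Units.coe_prod, Finset.prod_inv_distrib,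
        Finset.prod_pi_mulSingle', if_pos (Finset.mem_univ _), IsUnit.mul_val_inv]
    refine ⟨⟨_, hdet⟩, d, ?_⟩
    rw [SpecialLinearGroup.coe_mk, Matrix.mul_assoc, diagonal_mul_diagonal]
    simp only [Units.inv_mul, diagonal_one, Matrix.mul_one]

section PadicMatrix

variable {p : ℕ} [Fact p.Prime] {ι : Type*} [Fintype ι] [DecidableEq ι]

theorem Matrix.exists_padicInt_isUnit_det_of_norm_sub_one_lt (C : Matrix ι ι ℚ_[p])
    (hC : ∀ i j, ‖(C - 1) i j‖ < 1) :
    ∃ B : Matrix ι ι ℤ_[p], IsUnit B.det ∧ B.map (↑) = C := by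
  have hle : ∀ i j, ‖C i j‖ ≤ 1 := fun i j => by
    have h1 : ‖(1 : Matrix ι ι ℚ_[p]) i j‖ ≤ 1 := by rw [one_apply]; split_ifs <;> simp
    simpa using (Padic.nonarchimedean ((C - 1) i j) ((1 : Matrix ι ι ℚ_[p]) i j)).trans
      (max_le (hC i j).le h1)
  let B : Matrix ι ι ℤ_[p] := of fun i j => ⟨C i j, hle i j⟩
  have hB : B.map (↑) = C := rfl
  refine ⟨B, Matrix.isUnit_det_of_sub_one_mem_maximalIdeal B fun i j => ?_, hB⟩
  rw [IsLocalRing.mem_maximalIdeal, PadicInt.mem_nonunits, PadicInt.norm_def]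
  convert hC i j
  rw [sub_apply, sub_apply, one_apply, one_apply]
  split_ifs <;> simp only [PadicInt.coe_sub, PadicInt.coe_one] <;> rfl

theorem Matrix.exists_ratCast_mul_norm_sub_one_lt (A : Matrix ι ι ℚ_[p]) (hA : IsUnit A) :
    ∃ Q : Matrix ι ι ℚ, ∀ i j, ‖(Q.map (Rat.cast : ℚ → ℚ_[p]) * A - 1) i j‖ < 1 := by
  have hdense : DenseRange fun Q : Matrix ι ι ℚ => Q.map (Rat.cast : ℚ → ℚ_[p]) :=
    DenseRange.piMap fun _ => DenseRange.piMap fun _ => Padic.denseRange_ratCast p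
  have hopen : IsOpen {X : Matrix ι ι ℚ_[p] | ∀ i j, ‖(X * A - 1) i j‖ < 1} := by
    simp only [Set.ofPred_forall]
    refine isOpen_iInter_of_finite fun i => isOpen_iInter_of_finite fun j => ?_
    exact isOpen_lt (by fun_prop) continuous_const
  exact hdense.exists_mem_open hopen
    ⟨A⁻¹, by simp [nonsing_inv_mul A ((isUnit_iff_isUnit_det A).1 hA)]⟩

theorem Matrix.exists_ratCast_mul_eq_map_padicInt (A : Matrix ι ι ℚ_[p]) (hA : IsUnit A) :
    ∃ Q : Matrix ι ι ℚ, IsUnit Q ∧ ∃ B : Matrix ι ι ℤ_[p], IsUnit B.det ∧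
      Q.map (Rat.cast : ℚ → ℚ_[p]) * A = B.map ((↑) : ℤ_[p] → ℚ_[p]) := by
  obtain ⟨Q, hQ⟩ := exists_ratCast_mul_norm_sub_one_lt A hA
  obtain ⟨B, hB, hBQ⟩ := exists_padicInt_isUnit_det_of_norm_sub_one_lt _ hQ
  refine ⟨Q, (isUnit_iff_isUnit_det Q).2 (isUnit_iff_ne_zero.2 fun hQ0 => ?_), B, hB, hBQ.symm⟩
  have hQdet : (Q.map (Rat.cast : ℚ → ℚ_[p])).det = (Q.det : ℚ_[p]) :=
    ((Rat.castHom ℚ_[p]).map_det Q).symm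
  have hBdet : (B.map ((↑) : ℤ_[p] → ℚ_[p])).det = (B.det : ℚ_[p]) :=
    (PadicInt.Coe.ringHom.map_det B).symm
  have hdet := congrArg det hBQ
  rw [det_mul, hQdet, hBdet, hQ0, Rat.cast_zero, zero_mul] at hdet
  exact hB.ne_zero (PadicInt.coe_eq_zero.1 hdet)

end PadicMatrix

section StandardModule

variable {p : ℕ} [Fact p.Prime] {n : ℕ}

theorem zAct_mul (A B : Matrix (Fin n) (Fin n) ℚ_[p]) (M : Submodule ℤ_[p] (Fin n → ℚ_[p])) :
    zAct (A * B) M = zAct A (zAct B M) := by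
  rw [zAct, zAct, zAct, mulVecLin_mul, LinearMap.restrictScalars_comp, map_comp]

theorem mulVec_image_setOf_single (A : Matrix (Fin n) (Fin n) ℚ_[p]) (P : Fin n → Prop) :
    A.mulVec '' {w | ∃ i, P i ∧ w = Pi.single i 1} = A.col '' {i | P i} := by
  ext w
  simp [eq_comm]

theorem zAct_stdModule (A : Matrix (Fin n) (Fin n) ℚ_[p]) (k : ℕ) :
    zAct A (stdModule p n k) = (span ℚ_[p] (A.col '' {i | ↑i < k})).restrictScalars ℤ_[p] ⊔
      span ℤ_[p] (A.col '' {i | k ≤ ↑i}) := by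
  rw [zAct, stdModule, stdSubspace, Submodule.map_sup, ← restrictScalars_map, map_span, map_span]
  simp only [LinearMap.coe_restrictScalars, coe_mulVecLin, mulVec_image_setOf_single]

theorem zAct_diagonal_stdModule_le (d : Fin n → ℤ_[p]) (k : ℕ) :
    zAct (diagonal fun i => (d i : ℚ_[p])) (stdModule p n k) ≤ stdModule p n k := by
  rw [zAct_stdModule, stdModule, stdSubspace]
  refine sup_le_sup (restrictScalars_mono _ (span_le.2 ?_)) (span_le.2 ?_) <;>
    rintro _ ⟨i, hi, rfl⟩ <;> rw [col_diagonal]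
  · rw [← mul_one (d i : ℚ_[p]), ← smul_eq_mul, Pi.single_smul']
    exact smul_mem _ _ (subset_span ⟨i, hi, rfl⟩)
  · rw [← mul_one (d i : ℚ_[p]), ← smul_eq_mul, Pi.single_smul', ← PadicInt.algebraMap_apply,
      algebraMap_smul]
    exact smul_mem _ _ (subset_span ⟨i, hi, rfl⟩)

theorem zAct_diagonal_units_stdModule (d : Fin n → ℤ_[p]ˣ) (k : ℕ) :
    zAct (diagonal fun i => ((d i : ℤ_[p]) : ℚ_[p])) (stdModule p n k) = stdModule p n k := by
  refine le_antisymm (zAct_diagonal_stdModule_le _ k) ?_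
  have hinv : ((diagonal fun i => ((d i : ℤ_[p]) : ℚ_[p])) *
      diagonal fun i => ((((d i)⁻¹ : ℤ_[p]ˣ) : ℤ_[p]) : ℚ_[p])) = 1 := by
    rw [diagonal_mul_diagonal, ← diagonal_one]
    congr 1
    ext i
    rw [← PadicInt.coe_mul, Units.mul_inv, PadicInt.coe_one]
  calc stdModule p n k
      = zAct (diagonal fun i => ((d i : ℤ_[p]) : ℚ_[p]))
          (zAct (diagonal fun i => ((((d i)⁻¹ : ℤ_[p]ˣ) : ℤ_[p]) : ℚ_[p])) (stdModule p n k)) := by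
        rw [← zAct_mul, hinv, zAct, mulVecLin_one]
        exact (Submodule.map_id _).symm
    _ ≤ _ := map_mono (zAct_diagonal_stdModule_le _ k)

end StandardModule

section Construction

variable {p : ℕ} [Fact p.Prime] {n : ℕ}

theorem exists_specialLinearGroup_zAct_stdModule_eq (B : Matrix (Fin n) (Fin n) ℤ_[p])
    (hB : IsUnit B.det) (k : ℕ) :
    ∃ s : SpecialLinearGroup (Fin n) ℤ_[p],
      zAct (pMat s) (stdModule p n k) = zAct (B.map ((↑) : ℤ_[p] → ℚ_[p])) (stdModule p n k) := by
  obtain ⟨s, d, rfl⟩ := exists_eq_specialLinearGroup_mul_diagonal B hB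
  refine ⟨s, ?_⟩
  have hmap : ((s : Matrix (Fin n) (Fin n) ℤ_[p]) * diagonal fun i => (d i : ℤ_[p])).map
      ((↑) : ℤ_[p] → ℚ_[p]) = pMat s * diagonal fun i => ((d i : ℤ_[p]) : ℚ_[p]) := by
    rw [pMat, ← diagonal_map PadicInt.coe_zero]
    exact map_mul PadicInt.Coe.ringHom.mapMatrix _ _
  rw [hmap, zAct_mul, zAct_diagonal_units_stdModule]

theorem exists_isUnit_zAct_stdModule_eq {k : ℕ} (hk : k ≤ n)
    {V : Submodule ℚ_[p] (Fin n → ℚ_[p])} (hV : Module.finrank ℚ_[p] V = k)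
    {L : Submodule ℤ_[p] (Fin n → ℚ_[p])} (bL : Module.Basis (Fin (n - k)) ℤ_[p] L)
    (hdisj : Disjoint (V.restrictScalars ℤ_[p]) L) :
    ∃ A : Matrix (Fin n) (Fin n) ℚ_[p], IsUnit A ∧
      zAct A (stdModule p n k) = V.restrictScalars ℤ_[p] ⊔ L := by
  let bV := Module.finBasisOfFinrankEq ℚ_[p] V hV
  let v : Fin k ⊕ Fin (n - k) → Fin n → ℚ_[p] := Sum.elim (V.subtype ∘ bV) (L.subtype ∘ bL)
  have hv : LinearIndependent ℚ_[p] v := by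
    refine (bV.linearIndependent.map' V.subtype V.ker_subtype).sum_type
      ((bL.linearIndependent.map' L.subtype L.ker_subtype).localization ℚ_[p]
        (nonZeroDivisors ℤ_[p])) ?_
    rw [bV.span_range_subtype_comp, ← span_span_of_tower ℤ_[p], bL.span_range_subtype_comp]
    exact disjoint_span_of_disjoint_restrictScalars (nonZeroDivisors ℤ_[p]) hdisj
  let e : Fin k ⊕ Fin (n - k) ≃ Fin n := finSumFinEquiv.trans (finCongr (Nat.add_sub_cancel' hk))
  let A : Matrix (Fin n) (Fin n) ℚ_[p] := (of (v ∘ e.symm))ᵀ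
  refine ⟨A, linearIndependent_cols_iff_isUnit.1 (hv.comp _ e.symm.injective), ?_⟩
  have hcol : ∀ s, A.col '' s = v '' (e ⁻¹' s) := fun s => by
    rw [← e.image_symm_eq_preimage, ← Set.image_comp]; rfl
  have hlt : e ⁻¹' {i | ↑i < k} = Set.range Sum.inl := by ext (j | j) <;> simp [e]
  have hge : e ⁻¹' {i | k ≤ ↑i} = Set.range Sum.inr := by ext (j | j) <;> simp [e]
  rw [zAct_stdModule, hcol, hcol, hlt, hge, ← Set.range_comp, ← Set.range_comp]
  rw [Sum.elim_comp_inl, Sum.elim_comp_inr, bV.span_range_subtype_comp,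
    bL.span_range_subtype_comp]

end Construction

theorem complete_section_general (p n k : ℕ) [Fact p.Prime] (hk : k ≤ n)
    (M : Submodule ℤ_[p] (Fin n → ℚ_[p]))
    (V : Submodule ℚ_[p] (Fin n → ℚ_[p])) (hV : Module.finrank ℚ_[p] V = k)
    (L : Submodule ℤ_[p] (Fin n → ℚ_[p])) (bL : Module.Basis (Fin (n - k)) ℤ_[p] ↥L)
    (hsum : V.restrictScalars ℤ_[p] ⊔ L = M)
    (hdisj : V.restrictScalars ℤ_[p] ⊓ L = ⊥) :
    ∃ (g : GL (Fin n) ℚ) (s : Matrix.SpecialLinearGroup (Fin n) ℤ_[p]),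
      zAct (qMat g) M = zAct (pMat s) (stdModule p n k) := by
  obtain ⟨A, hA, hAM⟩ := exists_isUnit_zAct_stdModule_eq hk hV bL (disjoint_iff.2 hdisj)
  obtain ⟨Q, hQ, B, hB, hQA⟩ := exists_ratCast_mul_eq_map_padicInt A hA
  obtain ⟨s, hs⟩ := exists_specialLinearGroup_zAct_stdModule_eq B hB k
  refine ⟨hQ.unit, s, ?_⟩
  rw [hs, ← hQA, zAct_mul, hAM, hsum]
  rfl

/-- **Proposition 4.6.**  Every `ℤ_p`-module `M = V ⊕ L`, with `V` a `k`-dimensional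
subspace of `ℚ_p^n` and `L` a free `ℤ_p`-module of rank `n-k`, can be carried by an
element of `GL_n(ℚ)` onto a module in the `SL_n(ℤ_p)`-orbit of `M₀`. -/
theorem complete_section (p n k : ℕ) [Fact p.Prime] (hn : 1 ≤ n) (hk : k ≤ n)
    (M : Submodule ℤ_[p] (Fin n → ℚ_[p]))
    (V : Submodule ℚ_[p] (Fin n → ℚ_[p])) (hV : Module.finrank ℚ_[p] V = k)
    (L : Submodule ℤ_[p] (Fin n → ℚ_[p])) (bL : Module.Basis (Fin (n - k)) ℤ_[p] ↥L)
    (hsum : V.restrictScalars ℤ_[p] ⊔ L = M)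
    (hdisj : V.restrictScalars ℤ_[p] ⊓ L = ⊥) :
    ∃ (g : GL (Fin n) ℚ) (s : Matrix.SpecialLinearGroup (Fin n) ℤ_[p]),
      zAct (qMat g) M = zAct (pMat s) (stdModule p n k) :=
  complete_section_general p n k hk M V hV L bL hsum hdisj
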